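/- Suppose p and p′ are sibling tiles (i.e., the two tiles obtained by splitting a bitile into its lower and upper frequency halves), with common time interval I, and q is another tile with p < q. Then there exist constants c_{p,q} and c_{p′,q} with |c_{p,q}| = |c_{p′,q}| = (|I_q|/|I|)^{1/2} such that φ_p(x) = c_{p,q} 1_I(x) φ_q(x) and φ_{p′}(x) = c_{p′,q} |I|^{1/2} h_I(x) φ_q(x) for all x, where h_I is the Haar function associated with the dyadic interval I. -/

import Mathlib

open MeasureTheory Set
open scoped ENNReal NNReal Classical

noncomputable section
namespace Paper

/-- The Walsh functions `W_k`, supported on `[0,1)`. -/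
def walsh (k : ℕ) (x : ℝ) : ℝ :=
  if h : k = 0 then (if 0 ≤ x ∧ x < 1 then (1:ℝ) else 0)
  else walsh (k / 2) (2 * x) + (if k % 2 = 0 then (1:ℝ) else -1) * walsh (k / 2) (2 * x - 1)
termination_by k
decreasing_by all_goals exact Nat.div_lt_self (Nat.pos_of_ne_zero h) one_lt_two

/-- The dyadic interval `[2^j m, 2^j (m+1))`. -/
def dyadicI (j m : ℤ) : Set ℝ := Ico ((2:ℝ)^j * (m:ℝ)) ((2:ℝ)^j * ((m:ℝ)+1))

/-- A weight: positive a.e. and locally integrable. -/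
def IsWeight (w : ℝ → ℝ) : Prop :=
  (∀ᵐ x ∂(volume : Measure ℝ), 0 < w x) ∧ LocallyIntegrable w volume

/-- The measure `w(x) dx`. -/
def wMeasure (w : ℝ → ℝ) : Measure ℝ := volume.withDensity fun x => ENNReal.ofReal (w x)

/-- `[w]_{A_p} ≤ A` over dyadic intervals, for `1 < p`. -/
def ApBoundedBy (w : ℝ → ℝ) (p A : ℝ) : Prop :=
  ∀ j m : ℤ,
    ((2:ℝ)^(-j) * ∫ x in dyadicI j m, w x) *
      ((2:ℝ)^(-j) * ∫ x in dyadicI j m, w x ^ (-1/(p-1)))^(p-1) ≤ A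

/-- `[w]_{A_1} ≤ A` over dyadic intervals. -/
def A1BoundedBy (w : ℝ → ℝ) (A : ℝ) : Prop :=
  ∀ j m : ℤ,
    (2:ℝ)^(-j) * ∫ x in dyadicI j m, w x ≤ A * essInf w (volume.restrict (dyadicI j m))

/-- `w ∈ A_q` for `q ∈ [1,∞)`, covering also the case `q = 1`. -/
def MemAq (w : ℝ → ℝ) (q : ℝ) : Prop :=
  IsWeight w ∧ ((q = 1 ∧ ∃ A, A1BoundedBy w A) ∨ (1 < q ∧ ∃ A, ApBoundedBy w q A))

/-- `⟨f,g⟩ = ∫_0^1 f g`. -/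
def inner01 (f g : ℝ → ℝ) : ℝ := ∫ x in Ico (0:ℝ) 1, f x * g x

/-- Walsh--Fourier partial sums, `S_n f = 0` for `n < 0`. -/
def walshSum (f : ℝ → ℝ) (n : ℤ) (x : ℝ) : ℝ :=
  if n < 0 then 0
  else ∑ k ∈ Finset.range (n.toNat + 1), inner01 f (walsh k) * walsh k x

/-- Pointwise `r`-variation sup over all finite increasing integer sequences. -/
def varNormE (r : ℝ) (u : ℤ → ℝ) : ℝ≥0∞ :=
  ⨆ (M : ℕ) (N : Fin (M + 1) → ℤ) (_ : StrictMono N),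
    ENNReal.ofReal ((∑ j : Fin M, |u (N j.succ) - u (N j.castSucc)| ^ r) ^ (1 / r))

/-- A tile `[2^j m, 2^j (m+1)) × [2^{-j} n, 2^{-j}(n+1))`. -/
structure Tile where
  j : ℤ
  m : ℕ
  n : ℕ
deriving DecidableEq

namespace Tile
def timeI (p : Tile) : Set ℝ := Ico ((2:ℝ)^p.j * (p.m:ℝ)) ((2:ℝ)^p.j * ((p.m:ℝ)+1))
def freqI (p : Tile) : Set ℝ := Ico ((2:ℝ)^(-p.j) * (p.n:ℝ)) ((2:ℝ)^(-p.j) * ((p.n:ℝ)+1))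
def len (p : Tile) : ℝ := (2:ℝ)^p.j
def rect (p : Tile) : Set (ℝ × ℝ) := p.timeI ×ˢ p.freqI
/-- The order `p < q` on tiles: the tiles intersect and `I_p ⊆ I_q`. -/
def below (p q : Tile) : Prop := (p.rect ∩ q.rect).Nonempty ∧ p.timeI ⊆ q.timeI
/-- The Walsh packet of a tile. -/
def packet (p : Tile) (x : ℝ) : ℝ :=
  (2:ℝ) ^ (-(p.j:ℝ)/2) * walsh p.n ((2:ℝ)^(-p.j) * x - (p.m:ℝ))
end Tile

/-- A bitile `[2^j m, 2^j (m+1)) × [2^{1-j} n, 2^{1-j}(n+1))` (area 2). -/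
structure Bitile where
  j : ℤ
  m : ℕ
  n : ℕ
deriving DecidableEq

namespace Bitile
def timeI (P : Bitile) : Set ℝ := Ico ((2:ℝ)^P.j * (P.m:ℝ)) ((2:ℝ)^P.j * ((P.m:ℝ)+1))
def freqI (P : Bitile) : Set ℝ := Ico ((2:ℝ)^(1-P.j) * (P.n:ℝ)) ((2:ℝ)^(1-P.j) * ((P.n:ℝ)+1))
def len (P : Bitile) : ℝ := (2:ℝ)^P.j
def rect (P : Bitile) : Set (ℝ × ℝ) := P.timeI ×ˢ P.freqI
/-- The order `P < Q` on bitiles. -/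
def below (P Q : Bitile) : Prop := (P.rect ∩ Q.rect).Nonempty ∧ P.timeI ⊆ Q.timeI
/-- The lower tile `P_1`. -/
def lower (P : Bitile) : Tile := ⟨P.j, P.m, 2 * P.n⟩
/-- The upper tile `P_2`. -/
def upper (P : Bitile) : Tile := ⟨P.j, P.m, 2 * P.n + 1⟩
end Bitile

/-- A tree of bitiles with top `P_T`. -/
structure Tree where
  top : Bitile
  elems : Finset Bitile
  below_top : ∀ P ∈ elems, P.below top

/-- A tree is 2-overlapping if `P_2 < (P_T)_2` for all its members. -/
def Tree.TwoOverlapping (T : Tree) : Prop :=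
  ∀ P ∈ T.elems, (Bitile.upper P).below T.top.upper

/-- A tree is 1-overlapping if `P_1 < (P_T)_1` for all its members. -/
def Tree.OneOverlapping (T : Tree) : Prop :=
  ∀ P ∈ T.elems, (Bitile.lower P).below T.top.lower

/-- `⟨f, φ_p⟩`. -/
def pinner (f : ℝ → ℝ) (p : Tile) : ℝ := ∫ y, f y * p.packet y

/-- The tree square function `S_T f`. -/
def treeSq (f : ℝ → ℝ) (T : Tree) (x : ℝ) : ℝ :=
  Real.sqrt (∑ P ∈ T.elems,
    (pinner f P.lower)^2 * Set.indicator P.timeI (fun _ => (1:ℝ)) x / P.len)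

/-- The (weighted) size of a collection of bitiles: the least constant `C` with
`‖S_T f‖_{L²(w)} ≤ C w(I_T)^{1/2}` over all 2-overlapping trees in the collection,
realized as a supremum of ratios. -/
def size (w f : ℝ → ℝ) (Ps : Set Bitile) : ℝ≥0∞ :=
  ⨆ (T : Tree) (_ : (T.elems : Set Bitile) ⊆ Ps ∧ T.TwoOverlapping),
    eLpNorm (treeSq f T) 2 (wMeasure w) / (wMeasure w T.top.timeI) ^ (1/2 : ℝ)

/-- The coefficient `a_P(x)` built from linearizing data. -/
def coefP (M : ℝ → ℕ) (N : ℕ → ℝ → ℤ) (a : ℕ → ℝ → ℝ) (P : Bitile) (x : ℝ) : ℝ :=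
  ∑ j ∈ Finset.Icc 1 (M x),
    if ((N (j-1) x : ℝ)) ∉ P.freqI ∧ ((N j x : ℝ)) ∈ (Bitile.upper P).freqI then a j x else 0

/-- The (weighted) density of a collection of bitiles. -/
def density (w g : ℝ → ℝ) (r' : ℝ) (M : ℝ → ℕ) (N : ℕ → ℝ → ℤ) (a : ℕ → ℝ → ℝ)
    (Ps : Set Bitile) : ℝ≥0∞ :=
  ⨆ (P : Bitile) (_ : P ∈ Ps) (Q : Bitile) (_ : P.below Q),
    (ENNReal.ofReal (∫ x in Q.timeI,
        |g x| ^ r' * (∑ k ∈ Finset.Icc 1 (M x),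
          if ((N k x : ℝ)) ∈ Q.freqI then |a k x| ^ r' else 0) * w x)
      / wMeasure w Q.timeI) ^ (1/r')

/-- The bilinear form `B_Ps(f,g)`. -/
def bform (w f g : ℝ → ℝ) (M : ℝ → ℕ) (N : ℕ → ℝ → ℤ) (a : ℕ → ℝ → ℝ)
    (Ps : Finset Bitile) : ℝ :=
  ∑ P ∈ Ps, pinner f P.lower * ∫ x, P.lower.packet x * coefP M N a P x * g x * w x

/-- The linearized tree operator `C_T f`. -/
def treeOp (f : ℝ → ℝ) (M : ℝ → ℕ) (N : ℕ → ℝ → ℤ) (a : ℕ → ℝ → ℝ) (T : Tree) (x : ℝ) : ℝ :=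
  ∑ P ∈ T.elems, pinner f P.lower * P.lower.packet x * coefP M N a P x

/-- The Haar function of the dyadic interval `[2^j m, 2^j(m+1))`. -/
def haarFn (j m : ℤ) (x : ℝ) : ℝ :=
  if x ∈ Ico ((2:ℝ)^j * (m:ℝ)) ((2:ℝ)^j * ((m:ℝ) + 1/2)) then (2:ℝ) ^ (-(j:ℝ)/2)
  else if x ∈ Ico ((2:ℝ)^j * ((m:ℝ) + 1/2)) ((2:ℝ)^j * ((m:ℝ)+1)) then -(2:ℝ) ^ (-(j:ℝ)/2)
  else 0

/-- The martingale difference projection `Δ_j f` onto Haar functions at scale `2^{1-j}`. -/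
def haarProj (j : ℤ) (f : ℝ → ℝ) (x : ℝ) : ℝ :=
  ∑' m : ℤ, (∫ y, f y * haarFn (1-j) m y) * haarFn (1-j) m x

/-- The pointwise `r`-variation of the Haar martingale of `f`. -/
def varHaar (r : ℝ) (f : ℝ → ℝ) (x : ℝ) : ℝ≥0∞ :=
  ⨆ (M : ℕ) (N : Fin (M + 1) → ℤ) (_ : StrictMono N),
    ENNReal.ofReal ((∑ k : Fin M,
      |∑ j ∈ Finset.Ioc (N k.castSucc) (N k.succ), haarProj j f x| ^ r) ^ (1/r))

/-- The jump counting function `M_λ(x)`. -/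
def jumpCount (f : ℝ → ℝ) (lam : ℝ) (x : ℝ) : ℝ≥0∞ :=
  ⨆ (M : ℕ) (N : Fin (M + 1) → ℤ) (_ : StrictMono N),
    ((Finset.univ.filter (fun k : Fin M =>
      lam < |∑ j ∈ Finset.Ioc (N k.castSucc) (N k.succ), haarProj j f x|)).card : ℝ≥0∞)

/-- The square function of a finite collection of tiles. -/
def tileSq (f : ℝ → ℝ) (Ds : Finset Tile) (x : ℝ) : ℝ :=
  Real.sqrt (∑ p ∈ Ds, (pinner f p)^2 * Set.indicator p.timeI (fun _ => (1:ℝ)) x / p.len)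

/-- The dyadic sharp maximal function. -/
def sharpMax (g : ℝ → ℝ) (x : ℝ) : ℝ≥0∞ :=
  ⨆ (j : ℤ) (m : ℤ) (_ : x ∈ dyadicI j m),
    ⨅ c : ℝ, ENNReal.ofReal ((2:ℝ)^(-j) * ∫ y in dyadicI j m, |g y - c|)

/-- The dyadic `L²` maximal function `M_2`. -/
def M2fn (f : ℝ → ℝ) (x : ℝ) : ℝ≥0∞ :=
  ⨆ (j : ℤ) (m : ℤ) (_ : x ∈ dyadicI j m),
    ENNReal.ofReal (((2:ℝ)^(-j) * ∫ y in dyadicI j m, (f y)^2) ^ (1/2:ℝ))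

/-- The weak `L^{1,∞}(μ)` quasinorm. -/
def wkNorm (g : ℝ → ℝ) (μ : Measure ℝ) : ℝ≥0∞ :=
  ⨆ lam : ℝ, ENNReal.ofReal lam * μ {x | lam < |g x|}

/-!
Walsh packets at nested scales agree up to a sign and a cutoff. By the recursion,
`W_{⌊n/2⌋}(2y - b) = ±W_n(y)` whenever `2y - b ∈ [0,1)` (`b ∈ {0,1}`); iterating this `k` times
compares `φ_p` with `φ_q` when `|I_q| = 2^k |I_p|`, and `p < q` says exactly that `I_p` is one of
the `2^k` dyadic children of `I_q` and `n_p = ⌊n_q / 2^k⌋`. Siblings differ by the factor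
`W_1(2^{-j}x - m) = |I|^{1/2} h_I(x)`, because `W_{2n+1} = W_1 W_{2n}` and `W_{2n} = W_1 W_{2n+1}`.
-/

lemma walsh_zero_apply (y : ℝ) : walsh 0 y = (Ico (0:ℝ) 1).indicator (fun _ => 1) y := by
  rw [walsh]
  simp [indicator_apply]

lemma walsh_of_ne_zero {n : ℕ} (hn : n ≠ 0) (y : ℝ) :
    walsh n y =
      walsh (n / 2) (2 * y) + (if n % 2 = 0 then 1 else -1) * walsh (n / 2) (2 * y - 1) := by
  rw [walsh, dif_neg hn]

lemma walsh_eq_zero_of_notMem {y : ℝ} (hy : y ∉ Ico (0:ℝ) 1) (n : ℕ) : walsh n y = 0 := by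
  induction n using Nat.strong_induction_on generalizing y with
  | _ n ih =>
    rcases eq_or_ne n 0 with rfl | hn
    · simp [walsh_zero_apply, hy]
    · have hlt := Nat.div_lt_self (Nat.pos_of_ne_zero hn) one_lt_two
      rw [mem_Ico] at hy
      have h₁ : 2 * y ∉ Ico (0:ℝ) 1 := fun h => hy ⟨by linarith [h.1], by linarith [h.1, h.2]⟩
      have h₂ : 2 * y - 1 ∉ Ico (0:ℝ) 1 := fun h => hy ⟨by linarith [h.1], by linarith [h.2]⟩
      rw [walsh_of_ne_zero hn, ih _ hlt h₁, ih _ hlt h₂, mul_zero, add_zero]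

lemma indicator_mul_walsh (n : ℕ) (y : ℝ) :
    (Ico (0:ℝ) 1).indicator (fun _ => 1) y * walsh n y = walsh n y := by
  by_cases hy : y ∈ Ico (0:ℝ) 1
  · simp [hy]
  · simp [hy, walsh_eq_zero_of_notMem hy]

lemma walsh_of_lt_half (n : ℕ) {y : ℝ} (hy : y < 1 / 2) : walsh n y = walsh (n / 2) (2 * y) := by
  rcases eq_or_ne n 0 with rfl | hn
  · simp only [Nat.zero_div, walsh_zero_apply, indicator_apply, mem_Ico]
    refine if_congr ⟨fun h => ⟨?_, ?_⟩, fun h => ⟨?_, ?_⟩⟩ rfl rfl <;> linarith [h.1, h.2]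
  · have h : 2 * y - 1 ∉ Ico (0:ℝ) 1 := fun h => by linarith [h.1]
    rw [walsh_of_ne_zero hn, walsh_eq_zero_of_notMem h, mul_zero, add_zero]

lemma walsh_of_half_le (n : ℕ) {y : ℝ} (hy : 1 / 2 ≤ y) :
    walsh n y = (if n % 2 = 0 then 1 else -1) * walsh (n / 2) (2 * y - 1) := by
  rcases eq_or_ne n 0 with rfl | hn
  · simp only [walsh_zero_apply, indicator_apply, mem_Ico, Nat.zero_mod, if_true, Nat.zero_div,
      one_mul]
    refine if_congr ⟨fun h => ⟨?_, ?_⟩, fun h => ⟨?_, ?_⟩⟩ rfl rfl <;> linarith [h.1, h.2]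
  · have h : 2 * y ∉ Ico (0:ℝ) 1 := fun h => by linarith [h.2]
    rw [walsh_of_ne_zero hn, walsh_eq_zero_of_notMem h, zero_add]

lemma walsh_one_apply (z : ℝ) :
    walsh 1 z = if z ∈ Ico (0:ℝ) (1 / 2) then 1 else if z ∈ Ico (1 / 2 : ℝ) 1 then -1 else 0 := by
  rw [walsh_of_ne_zero one_ne_zero]
  simp only [Nat.reduceDiv, Nat.reduceMod, one_ne_zero, reduceIte, walsh_zero_apply,
    indicator_apply, mem_Ico]
  split_ifs <;> grind

lemma walsh_one_mul_walsh_two_mul (n : ℕ) (y : ℝ) :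
    walsh 1 y * walsh (2 * n) y = walsh (2 * n + 1) y := by
  have hd₀ : 2 * n / 2 = n := by omega
  have hd₁ : (2 * n + 1) / 2 = n := by omega
  have hm₀ : 2 * n % 2 = 0 := by omega
  have hm₁ : (2 * n + 1) % 2 = 1 := by omega
  rcases lt_or_ge y (1 / 2) with hy | hy
  · simp only [walsh_of_lt_half _ hy, hd₀, hd₁, Nat.reduceDiv, walsh_zero_apply,
      indicator_mul_walsh]
  · simp only [walsh_of_half_le _ hy, hd₀, hd₁, hm₀, hm₁, Nat.reduceDiv, Nat.reduceMod,
      one_ne_zero, reduceIte, walsh_zero_apply]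
    linear_combination (-1 : ℝ) * indicator_mul_walsh n (2 * y - 1)

lemma walsh_one_mul_walsh_two_mul_add_one (n : ℕ) (y : ℝ) :
    walsh 1 y * walsh (2 * n + 1) y = walsh (2 * n) y := by
  have hd₀ : 2 * n / 2 = n := by omega
  have hd₁ : (2 * n + 1) / 2 = n := by omega
  have hm₀ : 2 * n % 2 = 0 := by omega
  have hm₁ : (2 * n + 1) % 2 = 1 := by omega
  rcases lt_or_ge y (1 / 2) with hy | hy
  · simp only [walsh_of_lt_half _ hy, hd₀, hd₁, Nat.reduceDiv, walsh_zero_apply,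
      indicator_mul_walsh]
  · simp only [walsh_of_half_le _ hy, hd₀, hd₁, hm₀, hm₁, Nat.reduceDiv, Nat.reduceMod,
      one_ne_zero, reduceIte, walsh_zero_apply]
    linear_combination indicator_mul_walsh n (2 * y - 1)

lemma exists_walsh_div_two_eq {b : ℕ} (hb : b < 2) (n : ℕ) : ∃ ε : ℝ, |ε| = 1 ∧
    ∀ y : ℝ, 2 * y - b ∈ Ico (0:ℝ) 1 → walsh (n / 2) (2 * y - b) = ε * walsh n y := by
  interval_cases b
  · refine ⟨1, abs_one, fun y hy => ?_⟩
    rw [Nat.cast_zero, sub_zero] at hy ⊢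
    rw [one_mul, walsh_of_lt_half n (by linarith [hy.2])]
  · set s : ℝ := if n % 2 = 0 then 1 else -1
    have hs : s * s = 1 := by simp only [s]; split_ifs <;> norm_num
    refine ⟨s, by simp only [s]; split_ifs <;> norm_num, fun y hy => ?_⟩
    rw [Nat.cast_one] at hy ⊢
    rw [walsh_of_half_le n (by linarith [hy.1]), ← mul_assoc, hs, one_mul]

lemma exists_walsh_div_two_pow_eq (k : ℕ) {t : ℕ} (ht : t < 2 ^ k) (n : ℕ) : ∃ ε : ℝ, |ε| = 1 ∧
    ∀ y : ℝ, 2 ^ k * y - t ∈ Ico (0:ℝ) 1 → walsh (n / 2 ^ k) (2 ^ k * y - t) = ε * walsh n y := by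
  induction k generalizing t with
  | zero =>
    obtain rfl : t = 0 := by simpa using ht
    exact ⟨1, abs_one, fun y _ => by simp⟩
  | succ k ih =>
    have hb : t % 2 < 2 := Nat.mod_lt t two_pos
    obtain ⟨ε₁, hε₁, h₁⟩ := ih (t := t / 2) (by rw [pow_succ] at ht; omega)
    obtain ⟨ε₂, hε₂, h₂⟩ := exists_walsh_div_two_eq hb (n / 2 ^ k)
    refine ⟨ε₂ * ε₁, by rw [abs_mul, hε₁, hε₂, one_mul], fun y hy => ?_⟩
    have ht' : (t : ℝ) = 2 * ((t / 2 : ℕ) : ℝ) + ((t % 2 : ℕ) : ℝ) := by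
      exact_mod_cast (Nat.div_add_mod t 2).symm
    have harg : (2:ℝ) ^ (k + 1) * y - t = 2 * (2 ^ k * y - (t / 2 : ℕ)) - (t % 2 : ℕ) := by
      rw [ht', pow_succ]; ring
    have hb' : ((t % 2 : ℕ) : ℝ) ≤ 1 := by exact_mod_cast Nat.le_of_lt_succ hb
    rw [harg] at hy ⊢
    have hmem : 2 ^ k * y - (t / 2 : ℕ) ∈ Ico (0:ℝ) 1 :=
      ⟨by linarith [hy.1, Nat.cast_nonneg (α := ℝ) (t % 2)], by linarith [hy.2]⟩
    rw [pow_succ, ← Nat.div_div_eq_div_mul, h₂ _ hy, h₁ _ hmem, mul_assoc]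

lemma mem_Ico_two_zpow_mul_iff (j : ℤ) (m a b x : ℝ) :
    x ∈ Ico (2 ^ j * (m + a)) (2 ^ j * (m + b)) ↔ 2 ^ (-j) * x - m ∈ Ico a b := by
  have h : (0:ℝ) < 2 ^ j := zpow_pos two_pos j
  rw [sub_mem_Ico_iff_left, zpow_neg, ← div_eq_inv_mul, mem_Ico, mem_Ico, le_div_iff₀ h,
    div_lt_iff₀ h, mul_comm (a + m), mul_comm (b + m), add_comm a, add_comm b]

lemma natFloor_div_eq_of_mem_Ico {c x : ℝ} (hc : 0 < c) {m : ℕ}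
    (hx : x ∈ Ico (c * m) (c * (m + 1))) : ⌊x / c⌋₊ = m := by
  have hx₀ : 0 ≤ x := (mul_nonneg hc.le m.cast_nonneg).trans hx.1
  rw [Nat.floor_eq_iff (div_nonneg hx₀ hc.le), le_div_iff₀ hc, div_lt_iff₀ hc]
  exact ⟨by linarith [hx.1], by linarith [hx.2]⟩

namespace Tile

lemma mem_timeI_iff {p : Tile} {x : ℝ} : x ∈ p.timeI ↔ 2 ^ (-p.j) * x - p.m ∈ Ico (0:ℝ) 1 := by
  rw [← mem_Ico_two_zpow_mul_iff, add_zero]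
  rfl

lemma packet_eq_zero_of_notMem {p : Tile} {x : ℝ} (hx : x ∉ p.timeI) : p.packet x = 0 := by
  rw [packet, walsh_eq_zero_of_notMem (mem_timeI_iff.not.mp hx), mul_zero]

lemma below.exists_scale {p q : Tile} (h : p.below q) :
    ∃ k : ℕ, q.j = p.j + k ∧ q.m = p.m / 2 ^ k ∧ p.n = q.n / 2 ^ k := by
  obtain ⟨⟨⟨x, ξ⟩, ⟨hxp, hξp⟩, hxq, hξq⟩, hsub⟩ := h
  have hp : (0:ℝ) < 2 ^ p.j := zpow_pos two_pos _
  have hq : (0:ℝ) < 2 ^ q.j := zpow_pos two_pos _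
  have hle : p.j ≤ q.j := by
    obtain ⟨h₁, h₂⟩ := (Ico_subset_Ico_iff (by nlinarith)).mp hsub
    rw [← zpow_le_zpow_iff_right₀ one_lt_two (a := (2:ℝ))]
    linarith
  obtain ⟨k, hk⟩ := Int.exists_add_of_le hle
  have h2k : (2:ℝ) ^ (k : ℤ) = ((2 ^ k : ℕ) : ℝ) := by push_cast; rfl
  refine ⟨k, hk, ?_, ?_⟩
  · have hscale : (2:ℝ) ^ q.j = 2 ^ p.j * ((2 ^ k : ℕ) : ℝ) := by
      rw [hk, zpow_add₀ two_ne_zero, h2k]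
    have := natFloor_div_eq_of_mem_Ico hq hxq
    rwa [hscale, ← div_div, Nat.floor_div_natCast, natFloor_div_eq_of_mem_Ico hp hxp,
      eq_comm] at this
  · have hscale : (2:ℝ) ^ (-p.j) = 2 ^ (-q.j) * ((2 ^ k : ℕ) : ℝ) := by
      rw [hk, ← h2k, ← zpow_add₀ two_ne_zero]; ring_nf
    have := natFloor_div_eq_of_mem_Ico (zpow_pos two_pos _) hξp
    rwa [hscale, ← div_div, Nat.floor_div_natCast,
      natFloor_div_eq_of_mem_Ico (zpow_pos two_pos _) hξq, eq_comm] at this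

lemma below.exists_packet_eq {p q : Tile} (h : p.below q) :
    ∃ c : ℝ, |c| = (q.len / p.len) ^ (1 / 2 : ℝ) ∧
      ∀ x, p.packet x = c * p.timeI.indicator (fun _ => 1) x * q.packet x := by
  obtain ⟨k, hj, hm, hn⟩ := h.exists_scale
  obtain ⟨ε, hε, hw⟩ := exists_walsh_div_two_pow_eq k (Nat.mod_lt p.m (by positivity)) q.n
  have hlen : q.len / p.len = 2 ^ k := by
    rw [len, len, hj, zpow_add₀ two_ne_zero, zpow_natCast, mul_div_cancel_left₀ _ (by positivity)]
  have hnorm : (2:ℝ) ^ (-(p.j : ℝ) / 2) = (q.len / p.len) ^ (1 / 2 : ℝ) * 2 ^ (-(q.j : ℝ) / 2) := by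
    rw [hlen, ← Real.rpow_natCast, ← Real.rpow_mul zero_le_two, ← Real.rpow_add two_pos, hj]
    push_cast; ring_nf
  refine ⟨ε * (q.len / p.len) ^ (1 / 2 : ℝ), ?_, fun x => ?_⟩
  · rw [abs_mul, hε, one_mul, abs_of_nonneg (by rw [hlen]; positivity)]
  by_cases hx : x ∈ p.timeI
  · have hm' : (p.m : ℝ) = 2 ^ k * q.m + (p.m % 2 ^ k : ℕ) := by
      rw [hm]; exact_mod_cast (Nat.div_add_mod p.m (2 ^ k)).symm
    have harg : 2 ^ (-p.j) * x - p.m = 2 ^ k * (2 ^ (-q.j) * x - q.m) - (p.m % 2 ^ k : ℕ) := by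
      rw [hm', hj, neg_add, zpow_add₀ two_ne_zero, zpow_neg, zpow_neg, zpow_natCast]
      field_simp
      ring
    have hmem := mem_timeI_iff.mp hx
    rw [harg] at hmem
    rw [indicator_of_mem hx, packet, packet, harg, hn, hw _ hmem, hnorm]
    ring
  · rw [packet_eq_zero_of_notMem hx, indicator_of_notMem hx]
    ring

end Tile

lemma haarFn_eq_walsh_one (j m : ℤ) (x : ℝ) :
    haarFn j m x = 2 ^ (-(j : ℝ) / 2) * walsh 1 (2 ^ (-j) * x - m) := by
  have h₁ := mem_Ico_two_zpow_mul_iff j m 0 (1 / 2) x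
  have h₂ := mem_Ico_two_zpow_mul_iff j m (1 / 2) 1 x
  rw [add_zero] at h₁
  simp only [haarFn, h₁, h₂, walsh_one_apply]
  split_ifs <;> ring

namespace Bitile

lemma haarFn_mul_indicator_timeI (P : Bitile) (x : ℝ) :
    haarFn P.j P.m x * P.timeI.indicator (fun _ => 1) x = haarFn P.j P.m x := by
  by_cases hx : x ∈ P.timeI
  · rw [indicator_of_mem hx, mul_one]
  · have hy : 2 ^ (-P.j) * x - (P.m : ℝ) ∉ Ico (0:ℝ) 1 :=
      (Tile.mem_timeI_iff (p := P.lower)).not.mp hx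
    rw [haarFn_eq_walsh_one, Int.cast_natCast, walsh_eq_zero_of_notMem hy, mul_zero, zero_mul]

lemma len_rpow_half_mul (P : Bitile) : P.len ^ (1 / 2 : ℝ) * 2 ^ (-(P.j : ℝ) / 2) = 1 := by
  rw [len, ← Real.rpow_intCast, ← Real.rpow_mul zero_le_two, ← Real.rpow_add two_pos]
  ring_nf
  exact Real.rpow_zero 2

lemma packet_upper (P : Bitile) (x : ℝ) :
    P.upper.packet x = P.len ^ (1 / 2 : ℝ) * haarFn P.j P.m x * P.lower.packet x := by
  simp only [haarFn_eq_walsh_one, upper, lower, Tile.packet, Int.cast_natCast]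
  set y : ℝ := 2 ^ (-P.j) * x - P.m
  rw [← walsh_one_mul_walsh_two_mul]
  linear_combination (-(2 ^ (-(P.j : ℝ) / 2) * walsh 1 y * walsh (2 * P.n) y)) * P.len_rpow_half_mul

lemma packet_lower (P : Bitile) (x : ℝ) :
    P.lower.packet x = P.len ^ (1 / 2 : ℝ) * haarFn P.j P.m x * P.upper.packet x := by
  simp only [haarFn_eq_walsh_one, upper, lower, Tile.packet, Int.cast_natCast]
  set y : ℝ := 2 ^ (-P.j) * x - P.m
  rw [← walsh_one_mul_walsh_two_mul_add_one]
  linear_combination (-(2 ^ (-(P.j : ℝ) / 2) * walsh 1 y * walsh (2 * P.n + 1) y)) *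
    P.len_rpow_half_mul

end Bitile

/-- Lemma 2.1: if `p`, `p'` are sibling tiles with common time interval
`I` and `q` is a tile with `p < q`, then `φ_p = c_{p,q} 1_I φ_q` and
`φ_{p'} = c_{p',q} |I|^{1/2} h_I φ_q` with `|c_{p,q}| = |c_{p',q}| = (|I_q|/|I|)^{1/2}`. -/
theorem walsh_to_haar (P : Bitile) (p p' : Tile)
    (hsib : (p = P.lower ∧ p' = P.upper) ∨ (p = P.upper ∧ p' = P.lower))
    (qt : Tile) (hpq : Tile.below p qt) :
    ∃ c c' : ℝ,
      |c| = (qt.len / P.len) ^ ((1:ℝ)/2) ∧ |c'| = (qt.len / P.len) ^ ((1:ℝ)/2) ∧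
      (∀ x, p.packet x = c * Set.indicator P.timeI (fun _ => (1:ℝ)) x * qt.packet x) ∧
      (∀ x, p'.packet x = c' * P.len ^ ((1:ℝ)/2) * haarFn P.j (P.m : ℤ) x * qt.packet x) := by
  obtain ⟨c, hc, hp⟩ := hpq.exists_packet_eq
  have hI : p.timeI = P.timeI ∧ p.len = P.len := by
    rcases hsib with ⟨rfl, -⟩ | ⟨rfl, -⟩ <;> exact ⟨rfl, rfl⟩
  have hp' : ∀ x, p'.packet x = P.len ^ ((1:ℝ)/2) * haarFn P.j P.m x * p.packet x := by
    rcases hsib with ⟨rfl, rfl⟩ | ⟨rfl, rfl⟩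
    exacts [P.packet_upper, P.packet_lower]
  refine ⟨c, c, hI.2 ▸ hc, hI.2 ▸ hc, fun x => hI.1 ▸ hp x, fun x => ?_⟩
  rw [hp', hp, hI.1]
  linear_combination (P.len ^ ((1:ℝ)/2) * c * qt.packet x) * P.haarFn_mul_indicator_timeI x

end Paper
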